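/- arXiv:2205.14590 — 2 statements merged into one kernel-verified Lean document; each statement's English description precedes it below -/
import Mathlib

section
/- Policy gradient theorem for Markov games: for every initial distribution μ, state s, policy π, player i and action a_i, ∂V_i(μ,π)/∂π_i(s,a_i) = (1/(1−δ)) d_μ^π(s) Q_i(s,a_i;π), where d_μ^π(s) = (1−δ) ∑_{s^0} μ(s^0) ∑_{k≥0} δ^k Pr(s^k = s | s^0, π). -/
/-!
Write `M_π` for the state transition matrix and `r_π` for the vector of expected one-step payoffs.
The value vector is the Neumann series `V_π = ∑ₖ δᵏ M_πᵏ r_π = (1 - δ M_π)⁻¹ r_π`, valid whenever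
`‖δ M_π‖ < 1` in the ℓ∞ operator norm; this holds for genuine policies, where `‖M_π‖ = 1`, and
hence, by continuity, for all nearby (not necessarily stochastic) perturbations of them.
Changing the entry `π_i(s, a_i)` by `h` changes `M_π` and `r_π` only in row `s`, by `h` times the
transition row and the payoff of the deviation to `a_i`. Differentiating the inverse therefore
gives `V' = (1 - δ M_π)⁻¹ e_s Q_i(s, a_i)`, and the `(s₀, s)` entry of `(1 - δ M_π)⁻¹` is the
discounted visitation count normalised by `d_μ^π`.
-/

open Finset

namespace MPG

def simplex {α : Type*} [Fintype α] (p : α → ℝ) : Prop :=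
  (∀ x, 0 ≤ p x) ∧ ∑ x, p x = 1

variable {S I : Type*} {A : I → Type*}
variable [Fintype S] [DecidableEq S] [Fintype I] [DecidableEq I]
  [∀ i, Fintype (A i)] [∀ i, DecidableEq (A i)]

def IsPolicy (π : ∀ i, S → A i → ℝ) : Prop := ∀ i s, simplex (π i s)

def IsKernel (P : S → (∀ i, A i) → S → ℝ) : Prop := ∀ s a, simplex (P s a)

noncomputable def jointProb (π : ∀ i, S → A i → ℝ) (s : S) (a : ∀ i, A i) : ℝ :=
  ∏ i, π i s (a i)

noncomputable def stepDist (P : S → (∀ i, A i) → S → ℝ) (π : ∀ i, S → A i → ℝ)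
    (ν : S → ℝ) : S → ℝ :=
  fun s' => ∑ s, ν s * ∑ a, jointProb π s a * P s a s'

noncomputable def expReward (f : S → (∀ i, A i) → ℝ) (π : ∀ i, S → A i → ℝ)
    (ν : S → ℝ) : ℝ :=
  ∑ s, ν s * ∑ a, jointProb π s a * f s a

def dirac (s : S) : S → ℝ := fun s' => if s' = s then 1 else 0

/-- Value function: expected total discounted payoff of player `i` starting at `s`. -/
noncomputable def V (u : I → S → (∀ i, A i) → ℝ) (P : S → (∀ i, A i) → S → ℝ)
    (δ : ℝ) (π : ∀ i, S → A i → ℝ) (i : I) (s : S) : ℝ :=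
  ∑' k : ℕ, δ ^ k * expReward (u i) π ((stepDist P π)^[k] (dirac s))

def pureAt {i : I} (ai : A i) : S → A i → ℝ := fun _ b => if b = ai then 1 else 0

/-- The policy profile where player `i` deterministically plays `ai`. -/
noncomputable def devPolicy (π : ∀ i, S → A i → ℝ) (i : I) (ai : A i) :
    ∀ j, S → A j → ℝ :=
  Function.update π i (pureAt ai)

/-- Q-function: one-stage deviation value of player `i`. -/
noncomputable def Q (u : I → S → (∀ i, A i) → ℝ) (P : S → (∀ i, A i) → S → ℝ)
    (δ : ℝ) (π : ∀ i, S → A i → ℝ) (i : I) (s : S) (ai : A i) : ℝ :=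
  ∑ a, jointProb (devPolicy π i ai) s a *
    (u i s a + δ * ∑ s', P s a s' * V u P δ π i s')

noncomputable def Vmu (u : I → S → (∀ i, A i) → ℝ) (P : S → (∀ i, A i) → S → ℝ)
    (δ : ℝ) (π : ∀ i, S → A i → ℝ) (i : I) (μ : S → ℝ) : ℝ :=
  ∑ s, μ s * V u P δ π i s

/-- Discounted state visitation distribution. -/
noncomputable def dvisit (P : S → (∀ i, A i) → S → ℝ) (δ : ℝ)
    (π : ∀ i, S → A i → ℝ) (μ : S → ℝ) (s : S) : ℝ :=
  (1 - δ) * ∑ s0, μ s0 * ∑' k : ℕ, δ ^ k * ((stepDist P π)^[k] (dirac s0)) s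

/-- Stationary Nash equilibrium. -/
def IsNash (u : I → S → (∀ i, A i) → ℝ) (P : S → (∀ i, A i) → S → ℝ)
    (δ : ℝ) (π : ∀ i, S → A i → ℝ) : Prop :=
  IsPolicy π ∧ ∀ (i : I) (πi : S → A i → ℝ), (∀ s, simplex (πi s)) →
    ∀ μ : S → ℝ, simplex μ →
      Vmu u P δ (Function.update π i πi) i μ ≤ Vmu u P δ π i μ


/-- The policy profile where the single entry `π_i(s,a_i)` is replaced by `t`. -/
noncomputable def updateEntry (π : ∀ i, S → A i → ℝ) (i : I) (s : S) (ai : A i)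
    (t : ℝ) : ∀ j, S → A j → ℝ :=
  Function.update π i (fun s' b => if s' = s ∧ b = ai then t else π i s' b)

end MPG

section RingInverse

variable {R : Type*} [NormedRing R] [NormedAlgebra ℝ R] [HasSummableGeomSeries R]

theorem hasDerivAt_ringInverse_sub_smul (u : Rˣ) (e : R) (t₀ : ℝ) :
    HasDerivAt (fun t : ℝ => Ring.inverse ((u : R) - (t - t₀) • e)) (↑u⁻¹ * e * ↑u⁻¹) t₀ := by
  have hline : HasDerivAt (fun t : ℝ => (u : R) - (t - t₀) • e) (-e) t₀ := by
    simpa using ((hasDerivAt_id t₀).sub_const t₀).smul_const e |>.const_sub (u : R)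
  simpa [Function.comp_def] using
    (hasFDerivAt_ringInverse (𝕜 := ℝ) u).comp_hasDerivAt_of_eq t₀ hline (by simp)

end RingInverse

namespace Matrix

attribute [local instance] Matrix.linftyOpNormedAddCommGroup Matrix.linftyOpNormedSpace
  Matrix.linftyOpNormedRing Matrix.linftyOpNormedAlgebra

variable {n : Type*} [Fintype n]

theorem hasDerivAt_apply {f : ℝ → Matrix n n ℝ} {f' : Matrix n n ℝ} {t : ℝ}
    (hf : HasDerivAt f f' t) (a b : n) : HasDerivAt (fun t => f t a b) (f' a b) t :=
  (LinearMap.toContinuousLinearMap (entryLinearMap ℝ ℝ a b)).hasFDerivAt.comp_hasDerivAt t hf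

theorem linfty_opNorm_le_one_of_stochastic {M : Matrix n n ℝ} (hnonneg : ∀ a b, 0 ≤ M a b)
    (hrow : ∀ a, ∑ b, M a b = 1) : ‖M‖ ≤ 1 := by
  rw [linfty_opNorm_def, NNReal.coe_le_one]
  refine Finset.sup_le fun a _ => le_of_eq (NNReal.coe_injective ?_)
  simp [Real.norm_of_nonneg (hnonneg a _), hrow]

variable [DecidableEq n]

theorem hasSum_pow_smul_mulVec_apply {M : Matrix n n ℝ} {δ : ℝ} (hM : ‖δ • M‖ < 1)
    (v : n → ℝ) (a : n) :
    HasSum (fun k => δ ^ k * (M ^ k *ᵥ v) a) ((Ring.inverse (1 - δ • M) *ᵥ v) a) := by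
  simpa [smul_pow, smul_mulVec] using (hasSum_geom_series_inverse (δ • M) hM).mapL
    (LinearMap.toContinuousLinearMap ((LinearMap.proj a).comp ((mulVecBilin ℝ ℝ).flip v)))

theorem hasDerivAt_inverse_sub_smul_mulVec_apply (U : (Matrix n n ℝ)ˣ) (E : Matrix n n ℝ)
    (v w : n → ℝ) (t₀ : ℝ) (a : n) :
    HasDerivAt (fun t => (Ring.inverse ((U : Matrix n n ℝ) - (t - t₀) • E) *ᵥ
        (v + (t - t₀) • w)) a)
      ((↑U⁻¹ *ᵥ (E *ᵥ (↑U⁻¹ *ᵥ v) + w)) a) t₀ := by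
  have hinv := hasDerivAt_ringInverse_sub_smul U E t₀
  have hvec : ∀ b, HasDerivAt (fun t => (v + (t - t₀) • w) b) (w b) t₀ := fun b => by
    simpa using ((hasDerivAt_id t₀).sub_const t₀).mul_const (w b) |>.const_add (v b)
  refine (HasDerivAt.fun_sum (u := Finset.univ) fun b _ =>
    (hasDerivAt_apply hinv a b).mul (hvec b)).congr_deriv ?_
  simp only [sub_self, zero_smul, sub_zero, add_zero, Ring.inverse_unit]
  rw [mulVec_add, mulVec_mulVec, mulVec_mulVec, Pi.add_apply, Finset.sum_add_distrib]
  rfl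

end Matrix

namespace MPG

open Matrix Filter Topology

section JointProb

variable {S I : Type*} {A : I → Type*} [Fintype I]

theorem jointProb_nonneg [∀ i, Fintype (A i)] {π : ∀ i, S → A i → ℝ} (hπ : IsPolicy π) (s : S)
    (a : ∀ i, A i) : 0 ≤ jointProb π s a :=
  prod_nonneg fun j _ => (hπ j s).1 (a j)

theorem sum_jointProb [DecidableEq I] [∀ i, Fintype (A i)] {π : ∀ i, S → A i → ℝ}
    (hπ : IsPolicy π) (s : S) : ∑ a, jointProb π s a = 1 := by
  simp only [jointProb, ← Fintype.prod_sum, (hπ _ s).2, prod_const_one]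

theorem jointProb_update [DecidableEq I] (π : ∀ i, S → A i → ℝ) (i : I) (f : S → A i → ℝ) (x : S)
    (a : ∀ i, A i) :
    jointProb (Function.update π i f) x a = f x (a i) * ∏ j ∈ univ.erase i, π j x (a j) := by
  rw [jointProb, ← mul_prod_erase _ _ (mem_univ i), Function.update_self]
  congr 1
  exact prod_congr rfl fun j hj => by rw [Function.update_of_ne (ne_of_mem_erase hj)]

variable [DecidableEq I] [DecidableEq S] [∀ i, DecidableEq (A i)]

theorem jointProb_updateEntry (π : ∀ i, S → A i → ℝ) (i : I) (s : S) (ai : A i) (t : ℝ)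
    (x : S) (a : ∀ i, A i) :
    jointProb (updateEntry π i s ai t) x a =
      jointProb π x a +
        (t - π i s ai) * (Pi.single s (jointProb (devPolicy π i ai) s a) : S → ℝ) x := by
  by_cases hx : x = s
  · subst hx
    rw [updateEntry, devPolicy, jointProb_update, Pi.single_eq_same, jointProb_update,
      jointProb, ← mul_prod_erase _ _ (mem_univ i)]
    by_cases ha : a i = ai
    · simp only [ha, and_self, if_true, pureAt]
      ring
    · simp [ha, pureAt]
  · rw [Pi.single_eq_of_ne hx, mul_zero, add_zero, updateEntry, jointProb_update, jointProb,
      ← mul_prod_erase _ _ (mem_univ i)]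
    simp [hx]

theorem sum_jointProb_updateEntry_mul [∀ i, Fintype (A i)] (π : ∀ i, S → A i → ℝ) (i : I)
    (s : S) (ai : A i) (t : ℝ) (x : S) (g : (∀ i, A i) → ℝ) :
    ∑ a, jointProb (updateEntry π i s ai t) x a * g a =
      ∑ a, jointProb π x a * g a +
        (t - π i s ai) * (Pi.single s (∑ a, jointProb (devPolicy π i ai) s a * g a) : S → ℝ) x := by
  by_cases hx : x = s
  · subst hx
    simp [jointProb_updateEntry, add_mul, sum_add_distrib, mul_sum, mul_assoc]
  · simp [jointProb_updateEntry, hx]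

end JointProb

section ValueFunction

-- `‖·‖` on matrices is the ℓ∞ operator norm (maximal absolute row sum).
attribute [local instance] Matrix.linftyOpNormedAddCommGroup Matrix.linftyOpNormedSpace
  Matrix.linftyOpNormedRing Matrix.linftyOpNormedAlgebra

variable {S I : Type*} {A : I → Type*} [DecidableEq S] [Fintype I] [DecidableEq I]
  [∀ i, Fintype (A i)]

noncomputable def transitionMatrix (P : S → (∀ i, A i) → S → ℝ) (π : ∀ i, S → A i → ℝ) :
    Matrix S S ℝ :=
  Matrix.of fun s s' => ∑ a, jointProb π s a * P s a s'

noncomputable def rewardVec (f : S → (∀ i, A i) → ℝ) (π : ∀ i, S → A i → ℝ) : S → ℝ :=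
  fun s => ∑ a, jointProb π s a * f s a

section Perturbation

variable [∀ i, DecidableEq (A i)] (π : ∀ i, S → A i → ℝ) (i : I) (s : S) (ai : A i) (t : ℝ)

theorem transitionMatrix_updateEntry (P : S → (∀ i, A i) → S → ℝ) :
    transitionMatrix P (updateEntry π i s ai t) = transitionMatrix P π +
      (t - π i s ai) • vecMulVec (Pi.single s 1) (transitionMatrix P (devPolicy π i ai) s) := by
  ext x y
  by_cases hx : x = s
  · subst hx
    simp [transitionMatrix, sum_jointProb_updateEntry_mul, vecMulVec]
  · simp [transitionMatrix, sum_jointProb_updateEntry_mul, vecMulVec, hx]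

theorem rewardVec_updateEntry (f : S → (∀ i, A i) → ℝ) :
    rewardVec f (updateEntry π i s ai t) = rewardVec f π +
      (t - π i s ai) • Pi.single s (rewardVec f (devPolicy π i ai) s) := by
  ext x
  by_cases hx : x = s
  · subst hx
    simp [rewardVec, sum_jointProb_updateEntry_mul]
  · simp [rewardVec, sum_jointProb_updateEntry_mul, hx]

end Perturbation

variable [Fintype S]

theorem iterate_stepDist (P : S → (∀ i, A i) → S → ℝ) (π : ∀ i, S → A i → ℝ) (ν : S → ℝ)
    (k : ℕ) : (stepDist P π)^[k] ν = ν ᵥ* transitionMatrix P π ^ k := by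
  induction k with
  | zero => simp
  | succ k ih =>
    rw [Function.iterate_succ_apply', ih, pow_succ, ← vecMul_vecMul]
    rfl

theorem iterate_stepDist_dirac_dotProduct (P : S → (∀ i, A i) → S → ℝ)
    (π : ∀ i, S → A i → ℝ) (s₀ : S) (v : S → ℝ) (k : ℕ) :
    (stepDist P π)^[k] (dirac s₀) ⬝ᵥ v = (transitionMatrix P π ^ k *ᵥ v) s₀ := by
  have hdirac : dirac s₀ = Pi.single s₀ 1 := by
    funext x
    simp [dirac, Pi.single_apply]
  rw [iterate_stepDist, hdirac, single_one_vecMul]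
  rfl

theorem norm_smul_transitionMatrix_lt_one {P : S → (∀ i, A i) → S → ℝ} {π : ∀ i, S → A i → ℝ}
    {δ : ℝ} (hδ0 : 0 ≤ δ) (hδ1 : δ < 1) (hπ : IsPolicy π) (hP : IsKernel P) :
    ‖δ • transitionMatrix P π‖ < 1 := by
  have hM : ‖transitionMatrix P π‖ ≤ 1 := by
    refine linfty_opNorm_le_one_of_stochastic (fun s s' => ?_) fun s => ?_
    · exact sum_nonneg fun a _ => mul_nonneg (jointProb_nonneg hπ s a) ((hP s a).1 s')
    · simp only [transitionMatrix, of_apply]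
      rw [sum_comm]
      simp [← mul_sum, (hP s _).2, sum_jointProb hπ]
  rw [norm_smul, Real.norm_of_nonneg hδ0]
  nlinarith [norm_nonneg (transitionMatrix P π)]

theorem V_eq_inverse_mulVec (u : I → S → (∀ i, A i) → ℝ) {P : S → (∀ i, A i) → S → ℝ}
    {δ : ℝ} {π : ∀ i, S → A i → ℝ} (h : ‖δ • transitionMatrix P π‖ < 1) (i : I) (s₀ : S) :
    V u P δ π i s₀ = (Ring.inverse (1 - δ • transitionMatrix P π) *ᵥ rewardVec (u i) π) s₀ :=
  (tsum_congr fun k => congrArg (δ ^ k * ·) (iterate_stepDist_dirac_dotProduct P π s₀ _ k)).trans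
    (hasSum_pow_smul_mulVec_apply h _ s₀).tsum_eq

theorem dvisit_eq_sum_inverse {P : S → (∀ i, A i) → S → ℝ} {δ : ℝ} {π : ∀ i, S → A i → ℝ}
    (h : ‖δ • transitionMatrix P π‖ < 1) (μ : S → ℝ) (s : S) :
    dvisit P δ π μ s = (1 - δ) * ∑ s₀, μ s₀ * Ring.inverse (1 - δ • transitionMatrix P π) s₀ s := by
  have hvisit : ∀ s₀, ∑' k : ℕ, δ ^ k * ((stepDist P π)^[k] (dirac s₀)) s =
      Ring.inverse (1 - δ • transitionMatrix P π) s₀ s := fun s₀ => by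
    have := (hasSum_pow_smul_mulVec_apply h (Pi.single s 1) s₀).tsum_eq
    simp only [← iterate_stepDist_dirac_dotProduct, dotProduct_single_one,
      mulVec_single_one] at this
    exact this
  simp only [dvisit, hvisit]

theorem Q_eq_rewardVec_add [∀ i, DecidableEq (A i)] (u : I → S → (∀ i, A i) → ℝ)
    (P : S → (∀ i, A i) → S → ℝ) (δ : ℝ) (π : ∀ i, S → A i → ℝ) (i : I) (s : S) (ai : A i) :
    Q u P δ π i s ai = rewardVec (u i) (devPolicy π i ai) s +
      δ * (transitionMatrix P (devPolicy π i ai) s ⬝ᵥ V u P δ π i) := by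
  simp only [Q, rewardVec, transitionMatrix, dotProduct, of_apply, mul_add, sum_add_distrib,
    mul_sum, sum_mul]
  rw [sum_comm (γ := S)]
  congr 1
  exact sum_congr rfl fun _ _ => sum_congr rfl fun _ _ => by ring

theorem hasDerivAt_V_updateEntry [∀ i, DecidableEq (A i)] (u : I → S → (∀ i, A i) → ℝ)
    {P : S → (∀ i, A i) → S → ℝ} {δ : ℝ} {π : ∀ i, S → A i → ℝ} (hδ0 : 0 ≤ δ) (hδ1 : δ < 1)
    (hπ : IsPolicy π) (hP : IsKernel P) (i : I) (s : S) (ai : A i) (s₀ : S) :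
    HasDerivAt (fun t => V u P δ (updateEntry π i s ai t) i s₀)
      (Ring.inverse (1 - δ • transitionMatrix P π) s₀ s * Q u P δ π i s ai) (π i s ai) := by
  set M := transitionMatrix P π
  set E := vecMulVec (Pi.single s 1) (transitionMatrix P (devPolicy π i ai) s)
  have hM : ‖δ • M‖ < 1 := norm_smul_transitionMatrix_lt_one hδ0 hδ1 hπ hP
  set U := Units.oneSub (δ • M) hM
  have hU : (↑U⁻¹ : Matrix S S ℝ) = Ring.inverse (1 - δ • M) :=
    (NormedRing.inverse_one_sub _ hM).symm
  have hpath : ∀ t, 1 - δ • transitionMatrix P (updateEntry π i s ai t) =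
      ↑U - (t - π i s ai) • (δ • E) := fun t => by
    rw [transitionMatrix_updateEntry, Units.val_oneSub, smul_add, smul_comm δ (t - _)]
    abel
  have hnear : ∀ᶠ t in 𝓝 (π i s ai),
      ‖δ • transitionMatrix P (updateEntry π i s ai t)‖ < 1 := by
    simp_rw [transitionMatrix_updateEntry]
    have hcont : Continuous fun t : ℝ => ‖δ • (M + (t - π i s ai) • E)‖ := by fun_prop
    exact hcont.continuousAt.eventually_lt continuousAt_const (by simpa using hM)
  have hV : ∀ᶠ t in 𝓝 (π i s ai), V u P δ (updateEntry π i s ai t) i s₀ =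
      (Ring.inverse ((U : Matrix S S ℝ) - (t - π i s ai) • (δ • E)) *ᵥ (rewardVec (u i) π +
        (t - π i s ai) • Pi.single s (rewardVec (u i) (devPolicy π i ai) s))) s₀ := by
    filter_upwards [hnear] with t ht
    rw [V_eq_inverse_mulVec u ht, hpath, rewardVec_updateEntry]
  refine ((hasDerivAt_inverse_sub_smul_mulVec_apply U (δ • E) _ _ _ s₀).congr_of_eventuallyEq
    hV).congr_deriv ?_
  have hV₀ : ↑U⁻¹ *ᵥ rewardVec (u i) π = V u P δ π i :=
    funext fun s' => by rw [hU, V_eq_inverse_mulVec u hM]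
  rw [hV₀, hU, smul_mulVec, vecMulVec_mulVec, Q_eq_rewardVec_add]
  simp [mulVec_add, mulVec_smul]
  ring

end ValueFunction

variable {S I : Type*} {A : I → Type*}
variable [Fintype S] [DecidableEq S] [Fintype I] [DecidableEq I]
  [∀ i, Fintype (A i)] [∀ i, DecidableEq (A i)]

theorem policy_gradient_general (u : I → S → (∀ i, A i) → ℝ)
    (P : S → (∀ i, A i) → S → ℝ) (δ : ℝ) (π : ∀ i, S → A i → ℝ) (μ : S → ℝ)
    (hδ0 : 0 < δ) (hδ1 : δ < 1) (hπ : IsPolicy π) (hP : IsKernel P)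
    (i : I) (s : S) (ai : A i) :
    HasDerivAt (fun t => Vmu u P δ (updateEntry π i s ai t) i μ)
      (1 / (1 - δ) * dvisit P δ π μ s * Q u P δ π i s ai) (π i s ai) := by
  have hM := norm_smul_transitionMatrix_lt_one hδ0.le hδ1 hπ hP
  refine (HasDerivAt.fun_sum fun s₀ _ =>
    (hasDerivAt_V_updateEntry u hδ0.le hδ1 hπ hP i s ai s₀).const_mul (μ s₀)).congr_deriv ?_
  rw [dvisit_eq_sum_inverse hM, one_div, inv_mul_cancel_left₀ (sub_ne_zero.2 hδ1.ne'), sum_mul]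
  exact sum_congr rfl fun _ _ => by ring

/-- policy gradient theorem for Markov games:
`∂V_i(μ,π)/∂π_i(s,a_i) = (1/(1-δ)) d_μ^π(s) Q_i(s,a_i;π)`. -/
theorem policy_gradient (u : I → S → (∀ i, A i) → ℝ)
    (P : S → (∀ i, A i) → S → ℝ) (δ : ℝ) (π : ∀ i, S → A i → ℝ) (μ : S → ℝ)
    (hδ0 : 0 < δ) (hδ1 : δ < 1) (hπ : IsPolicy π) (hP : IsKernel P)
    (hμ : simplex μ) (i : I) (s : S) (ai : A i) :
    HasDerivAt (fun t => Vmu u P δ (updateEntry π i s ai t) i μ)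
      (1 / (1 - δ) * dvisit P δ π μ s * Q u P δ π i s ai) (π i s ai) :=
  policy_gradient_general u P δ π μ hδ0 hδ1 hπ hP i s ai

end MPG
end

section
/- In a Markov potential game, if a policy π* satisfies π* ∈ argmax_{π ∈ Π} Φ(s, π) for every state s, then π* is a stationary Nash equilibrium. -/
open Finset

namespace MPG

variable {S I : Type*} {A : I → Type*}
variable [Fintype S] [DecidableEq S] [Fintype I] [DecidableEq I]
  [∀ i, Fintype (A i)] [∀ i, DecidableEq (A i)]

/-- in a Markov potential game, a policy maximizing the potential
`Φ(s,·)` over all policies for every state `s` is a stationary Nash equilibrium. -/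
theorem potential_maximizer_is_nash (u : I → S → (∀ i, A i) → ℝ)
    (P : S → (∀ i, A i) → S → ℝ) (δ : ℝ)
    (Φ : S → (∀ i, S → A i → ℝ) → ℝ)
    (hδ0 : 0 < δ) (hδ1 : δ < 1) (hP : IsKernel P)
    (hpot : ∀ (s : S) (i : I) (πi' : S → A i → ℝ) (π : ∀ j, S → A j → ℝ),
      IsPolicy π → (∀ s', simplex (πi' s')) →
        Φ s (Function.update π i πi') - Φ s π =
          V u P δ (Function.update π i πi') i s - V u P δ π i s)
    (πs : ∀ i, S → A i → ℝ) (hπs : IsPolicy πs)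
    (hmax : ∀ (s : S) (π : ∀ i, S → A i → ℝ), IsPolicy π → Φ s π ≤ Φ s πs) :
    IsNash u P δ πs := by
  refine ⟨hπs, fun i πi hπi μ hμ => ?_⟩
  have hpol : IsPolicy (Function.update πs i πi) := by
    intro j s
    by_cases hj : j = i
    · subst hj; simpa using hπi s
    · simpa [Function.update_of_ne hj] using hπs j s
  have hV : ∀ s, V u P δ (Function.update πs i πi) i s ≤ V u P δ πs i s := by
    intro s
    have h1 := hpot s i πi πs hπs hπi
    have h2 := hmax s (Function.update πs i πi) hpol
    linarith
  unfold Vmu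
  exact Finset.sum_le_sum fun s _ => mul_le_mul_of_nonneg_left (hV s) (hμ.1 s)

end MPG
end
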